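/- arXiv:1912.12808 — 7 statements merged into one kernel-verified Lean document; each statement's English description precedes it below -/
import Mathlib

section
/- The general boundary K-matrix of the 6-vertex model solves the reflection equation: for all nonzero complex numbers x and y, R(y/x)·(K(x) ⊗ I₂)·R̄(xy)·(I₂ ⊗ K(y)) = (I₂ ⊗ K(y))·R(1/(xy))·(K(x) ⊗ I₂)·R̄(x/y), where K(z) = [[z^{s₀}ε₊ + z^{−s₁}ε₋, k₊(z^s − z^{−s})/(q − q⁻¹)], [k₋(z^s − z^{−s})/(q − q⁻¹), z^{−s₀}ε₊ + z^{s₁}ε₋]] for arbitrary scalars ε₊, ε₋, k₊, k₋ ∈ ℂ. -/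
open Matrix
open scoped Kronecker

/-- The R-matrix of the 6-vertex model, acting on `ℂ² ⊗ ℂ²`. -/
noncomputable def Rm (q : ℂ) (s₀ s₁ : ℤ) (z : ℂ) :
    Matrix (Fin 2 × Fin 2) (Fin 2 × Fin 2) ℂ :=
  Matrix.of fun p p' =>
    if p = p' then (if p.1 = p.2 then q - q⁻¹ * z ^ (s₀ + s₁) else 1 - z ^ (s₀ + s₁))
    else if p = (0, 1) ∧ p' = (1, 0) then (q - q⁻¹) * z ^ s₁
    else if p = (1, 0) ∧ p' = (0, 1) then (q - q⁻¹) * z ^ s₀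
    else 0

/-- The second R-matrix of the 6-vertex model. -/
noncomputable def Rbar (q : ℂ) (s₀ s₁ : ℤ) (z : ℂ) :
    Matrix (Fin 2 × Fin 2) (Fin 2 × Fin 2) ℂ :=
  Matrix.of fun p p' =>
    if p = p' then (if p.1 = p.2 then q - q⁻¹ * z ^ (-(s₀ + s₁)) else 1 - z ^ (-(s₀ + s₁)))
    else if p = (0, 1) ∧ p' = (1, 0) then (q - q⁻¹) * z ^ (-s₀)
    else if p = (1, 0) ∧ p' = (0, 1) then (q - q⁻¹) * z ^ (-s₁)
    else 0

/-- The general boundary K-matrix. -/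
noncomputable def Km (q : ℂ) (s₀ s₁ : ℤ) (εp εm kp km : ℂ) (z : ℂ) :
    Matrix (Fin 2) (Fin 2) ℂ :=
  !![z ^ s₀ * εp + z ^ (-s₁) * εm, kp * (z ^ (s₀ + s₁) - z ^ (-(s₀ + s₁))) / (q - q⁻¹);
     km * (z ^ (s₀ + s₁) - z ^ (-(s₀ + s₁))) / (q - q⁻¹), z ^ (-s₀) * εp + z ^ s₁ * εm]

/-!
Put `a = x ^ s₀`, `b = x ^ s₁`, `c = y ^ s₀`, `d = y ^ s₁`. Every matrix in the equation is a
function of these Laurent monomials: `R(z)` depends on `z` only through `z ^ s₀` and `z ^ s₁`,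
`R̄(z)` is `R(z⁻¹)` with `s₀` and `s₁` exchanged, and the off-diagonal coefficients
`k± / (q - q⁻¹)` of `K` enter only as two free constants. The reflection equation thus becomes a
rational identity in `q, a, b, c, d`, checked entry by entry.
-/

section MultiplicativeParameters

variable {F : Type*} [Field F]

def sixVertexR (q u v : F) : Matrix (Fin 2 × Fin 2) (Fin 2 × Fin 2) F :=
  Matrix.of fun p p' =>
    if p = p' then (if p.1 = p.2 then q - q⁻¹ * (u * v) else 1 - u * v)
    else if p = (0, 1) ∧ p' = (1, 0) then (q - q⁻¹) * v
    else if p = (1, 0) ∧ p' = (0, 1) then (q - q⁻¹) * u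
    else 0

def boundaryK (εp εm kp km u v : F) : Matrix (Fin 2) (Fin 2) F :=
  !![u * εp + v⁻¹ * εm, kp * (u * v - (u * v)⁻¹);
     km * (u * v - (u * v)⁻¹), u⁻¹ * εp + v * εm]

theorem sixVertexR_boundaryK_reflection_equation {q a b c d : F} (hq : q ≠ 0) (ha : a ≠ 0)
    (hb : b ≠ 0) (hc : c ≠ 0) (hd : d ≠ 0) (εp εm kp km : F) :
    sixVertexR q (c / a) (d / b) *
        (boundaryK εp εm kp km a b ⊗ₖ (1 : Matrix (Fin 2) (Fin 2) F)) *
        sixVertexR q (b * d)⁻¹ (a * c)⁻¹ *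
        ((1 : Matrix (Fin 2) (Fin 2) F) ⊗ₖ boundaryK εp εm kp km c d)
      = ((1 : Matrix (Fin 2) (Fin 2) F) ⊗ₖ boundaryK εp εm kp km c d) *
        sixVertexR q (a * c)⁻¹ (b * d)⁻¹ *
        (boundaryK εp εm kp km a b ⊗ₖ (1 : Matrix (Fin 2) (Fin 2) F)) *
        sixVertexR q (d / b) (c / a) := by
  ext ⟨i, j⟩ ⟨k, l⟩
  fin_cases i <;> fin_cases j <;> fin_cases k <;> fin_cases l <;>
    simp only [sixVertexR, boundaryK, mul_apply, one_apply, of_apply, kroneckerMap_apply,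
      Fintype.sum_prod_type, Fin.sum_univ_two, Finset.sum_ite_eq', Finset.sum_ite_irrel,
      Finset.sum_const_zero, Finset.mem_univ, Prod.mk.injEq, Fin.isValue, Fin.mk_one,
      Fin.zero_eta, cons_val', cons_val_fin_one, cons_val_one, cons_val_zero, one_ne_zero,
      zero_ne_one, and_false, and_self, and_true, false_and, true_and, ite_mul, mul_ite,
      ite_self, ↓reduceIte, _root_.mul_inv_rev, add_zero, zero_add, mul_one, one_mul, mul_zero,
      zero_mul] <;>
    field_simp <;> ring

end MultiplicativeParameters

theorem Rm_eq_sixVertexR (q : ℂ) (s₀ s₁ : ℤ) {z : ℂ} (hz : z ≠ 0) :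
    Rm q s₀ s₁ z = sixVertexR q (z ^ s₀) (z ^ s₁) := by
  simp only [Rm, sixVertexR, zpow_add₀ hz]

theorem Rbar_eq_Rm_inv (q : ℂ) (s₀ s₁ : ℤ) (z : ℂ) : Rbar q s₀ s₁ z = Rm q s₁ s₀ z⁻¹ := by
  simp only [Rbar, Rm, _root_.inv_zpow', add_comm s₁]

theorem Km_eq_boundaryK (q : ℂ) (s₀ s₁ : ℤ) (εp εm kp km : ℂ) {z : ℂ} (hz : z ≠ 0) :
    Km q s₀ s₁ εp εm kp km z =
      boundaryK εp εm (kp / (q - q⁻¹)) (km / (q - q⁻¹)) (z ^ s₀) (z ^ s₁) := by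
  simp only [Km, boundaryK, zpow_add₀ hz, _root_.zpow_neg, mul_div_right_comm]

theorem general_K_solves_reflection_equation_general
    (q : ℂ) (hq0 : q ≠ 0) (s₀ s₁ : ℤ) (εp εm kp km : ℂ)
    (x y : ℂ) (hx : x ≠ 0) (hy : y ≠ 0) :
    Rm q s₀ s₁ (y / x) * (Km q s₀ s₁ εp εm kp km x ⊗ₖ (1 : Matrix (Fin 2) (Fin 2) ℂ)) *
        Rbar q s₀ s₁ (x * y) * ((1 : Matrix (Fin 2) (Fin 2) ℂ) ⊗ₖ Km q s₀ s₁ εp εm kp km y)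
      = ((1 : Matrix (Fin 2) (Fin 2) ℂ) ⊗ₖ Km q s₀ s₁ εp εm kp km y) *
        Rm q s₀ s₁ (1 / (x * y)) *
        (Km q s₀ s₁ εp εm kp km x ⊗ₖ (1 : Matrix (Fin 2) (Fin 2) ℂ)) *
        Rbar q s₀ s₁ (x / y) := by
  have hxy : x * y ≠ 0 := mul_ne_zero hx hy
  rw [Rbar_eq_Rm_inv, Rbar_eq_Rm_inv, inv_div, one_div,
    Rm_eq_sixVertexR q s₀ s₁ (div_ne_zero hy hx), Rm_eq_sixVertexR q s₁ s₀ (inv_ne_zero hxy),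
    Rm_eq_sixVertexR q s₀ s₁ (inv_ne_zero hxy), Rm_eq_sixVertexR q s₁ s₀ (div_ne_zero hy hx),
    Km_eq_boundaryK q s₀ s₁ εp εm kp km hx, Km_eq_boundaryK q s₀ s₁ εp εm kp km hy]
  simp only [div_zpow, _root_.inv_zpow, mul_zpow]
  exact sixVertexR_boundaryK_reflection_equation hq0 (zpow_ne_zero s₀ hx) (zpow_ne_zero s₁ hx)
    (zpow_ne_zero s₀ hy) (zpow_ne_zero s₁ hy) _ _ _ _

/-- The general boundary K-matrix of the 6-vertex model solves the reflection equation. -/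
theorem general_K_solves_reflection_equation
    (q : ℂ) (hq0 : q ≠ 0) (hq2 : q ^ 2 ≠ 1) (s₀ s₁ : ℤ) (εp εm kp km : ℂ)
    (x y : ℂ) (hx : x ≠ 0) (hy : y ≠ 0) :
    Rm q s₀ s₁ (y / x) * (Km q s₀ s₁ εp εm kp km x ⊗ₖ (1 : Matrix (Fin 2) (Fin 2) ℂ)) *
        Rbar q s₀ s₁ (x * y) * ((1 : Matrix (Fin 2) (Fin 2) ℂ) ⊗ₖ Km q s₀ s₁ εp εm kp km y)
      = ((1 : Matrix (Fin 2) (Fin 2) ℂ) ⊗ₖ Km q s₀ s₁ εp εm kp km y) *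
        Rm q s₀ s₁ (1 / (x * y)) *
        (Km q s₀ s₁ εp εm kp km x ⊗ₖ (1 : Matrix (Fin 2) (Fin 2) ℂ)) *
        Rbar q s₀ s₁ (x / y) :=
  general_K_solves_reflection_equation_general q hq0 s₀ s₁ εp εm kp km x y hx hy
end

section
/- The reflection equation is invariant under transposition of the K-matrix: if a family K : ℂ \ {0} → Mat₂(ℂ) satisfies the reflection equation with parameters (s₀, s₁), then the family x ↦ K(x)ᵀ (the matrix transpose) also satisfies the reflection equation with the same parameters (s₀, s₁). -/
open Matrix
open scoped Kronecker

/-- A family `K` of 2×2 matrices satisfies the reflection equation with parameters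
`(s₀, s₁)`. -/
def SatisfiesRE (q : ℂ) (s₀ s₁ : ℤ) (K : ℂ → Matrix (Fin 2) (Fin 2) ℂ) : Prop :=
  ∀ x y : ℂ, x ≠ 0 → y ≠ 0 →
    Rm q s₀ s₁ (y / x) * (K x ⊗ₖ (1 : Matrix (Fin 2) (Fin 2) ℂ)) *
        Rbar q s₀ s₁ (x * y) * ((1 : Matrix (Fin 2) (Fin 2) ℂ) ⊗ₖ K y)
      = ((1 : Matrix (Fin 2) (Fin 2) ℂ) ⊗ₖ K y) * Rm q s₀ s₁ (1 / (x * y)) *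
        (K x ⊗ₖ (1 : Matrix (Fin 2) (Fin 2) ℂ)) * Rbar q s₀ s₁ (x / y)


/-! Since `(R z)ᵀ = R̄ z⁻¹` and `(R̄ z)ᵀ = R z⁻¹`, transposing the reflection equation for `K` at
`(x, y)` turns each side into the opposite side of the reflection equation for `Kᵀ` at `(x, y)`. -/

lemma transpose_Rm (q : ℂ) (s₀ s₁ : ℤ) (z : ℂ) : (Rm q s₀ s₁ z)ᵀ = Rbar q s₀ s₁ z⁻¹ := by
  ext ⟨i, j⟩ ⟨k, l⟩
  fin_cases i <;> fin_cases j <;> fin_cases k <;> fin_cases l <;>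
    simp [Rm, Rbar, _root_.zpow_neg, Prod.ext_iff]

lemma transpose_Rbar (q : ℂ) (s₀ s₁ : ℤ) (z : ℂ) : (Rbar q s₀ s₁ z)ᵀ = Rm q s₀ s₁ z⁻¹ := by
  simpa using (congrArg transpose (transpose_Rm q s₀ s₁ z⁻¹)).symm

theorem reflection_equation_transpose_invariant_general
    (q : ℂ) (s₀ s₁ : ℤ)
    (K : ℂ → Matrix (Fin 2) (Fin 2) ℂ) (hK : SatisfiesRE q s₀ s₁ K) :
    SatisfiesRE q s₀ s₁ (fun x => (K x)ᵀ) := by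
  intro x y hx hy
  have h := congrArg transpose (hK x y hx hy)
  simp only [transpose_mul, ← kroneckerMap_transpose, transpose_one, transpose_Rm,
    transpose_Rbar, inv_div, one_div, inv_inv, Matrix.mul_assoc] at h
  simp only [one_div, Matrix.mul_assoc]
  exact h.symm

/-- The reflection equation is invariant under transposition of the K-matrix. -/
theorem reflection_equation_transpose_invariant
    (q : ℂ) (hq0 : q ≠ 0) (hq2 : q ^ 2 ≠ 1) (s₀ s₁ : ℤ)
    (K : ℂ → Matrix (Fin 2) (Fin 2) ℂ) (hK : SatisfiesRE q s₀ s₁ K) :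
    SatisfiesRE q s₀ s₁ (fun x => (K x)ᵀ) :=
  reflection_equation_transpose_invariant_general q s₀ s₁ K hK
end

section
/- The quantum Serre relations of the affine algebra hold under the evaluation map to U_q(sl₂): in any algebra with elements E, F, K satisfying the U_q(sl₂) relations, one has [E, [E, [E, F]_{q²}]]_{q⁻²} = 0 and [F, [F, [F, E]_{q⁻²}]]_{q²} = 0, where [X,Y]_p = XY − pYX and the middle bracket is the ordinary commutator [X,Y] = XY − YX. -/
/-!
With `t = q²` and `c = (q − q⁻¹)⁻¹` write `H = [E, F] = c (K − K⁻¹)`. A direct expansion gives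
`[E, [E, F]_t] = [E, H]_t`, and `[E, Z]_p = (1 − p s) E Z` whenever `Z E = s E Z`. Since
`K E = t E K` and `K⁻¹ E = t⁻¹ E K⁻¹`, the `K⁻¹` part is killed by `[E, -]_t` and the middle
bracket is a multiple of `E K`; as `(E K) E = t E (E K)`, this is in turn killed by
`[E, -]_{t⁻¹}`. The relation for `F` is the same statement with `t = q⁻²`, `E, F` swapped and
`c` replaced by `-c`.
-/

/-- The q-commutator `[X,Y]_p = XY − p·YX`. -/
def qComm {A : Type*} [Ring A] [Algebra ℂ A] (p : ℂ) (X Y : A) : A :=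
  X * Y - p • (Y * X)

section

variable {A : Type*} [Ring A] [Algebra ℂ A]

theorem qComm_smul_right (p c : ℂ) (X Y : A) : qComm p X (c • Y) = c • qComm p X Y := by
  simp only [qComm, mul_smul_comm, smul_mul_assoc, smul_sub, smul_comm p c]

theorem qComm_sub_right (p : ℂ) (X Y Z : A) :
    qComm p X (Y - Z) = qComm p X Y - qComm p X Z := by
  simp only [qComm, mul_sub, sub_mul, smul_sub]
  abel

theorem qComm_of_mul_eq_smul_mul {p s : ℂ} {X Z : A} (h : Z * X = s • (X * Z)) :
    qComm p X Z = (1 - p * s) • (X * Z) := by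
  rw [qComm, h, smul_smul, sub_smul, one_smul]

theorem commutator_qComm_eq_qComm_commutator (t : ℂ) (X Y : A) :
    X * qComm t X Y - qComm t X Y * X = qComm t X (X * Y - Y * X) := by
  simp only [qComm, mul_sub, sub_mul, mul_smul_comm, smul_mul_assoc, smul_sub, mul_assoc]
  abel

theorem qComm_qComm_commutator_eq_zero {t c : ℂ} (ht : t ≠ 0) {X Y Kp Km : A}
    (hp : Kp * X = t • (X * Kp)) (hm : Km * X = t⁻¹ • (X * Km))
    (hXY : X * Y - Y * X = c • (Kp - Km)) :
    qComm t⁻¹ X (X * qComm t X Y - qComm t X Y * X) = 0 := by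
  have hXKp : (X * Kp) * X = t • (X * (X * Kp)) := by
    rw [mul_assoc, hp, mul_smul_comm]
  rw [commutator_qComm_eq_qComm_commutator, hXY, qComm_smul_right, qComm_sub_right,
    qComm_of_mul_eq_smul_mul hp, qComm_of_mul_eq_smul_mul hm, mul_inv_cancel₀ ht, sub_self,
    zero_smul, sub_zero, qComm_smul_right, qComm_smul_right, qComm_of_mul_eq_smul_mul hXKp,
    inv_mul_cancel₀ ht, sub_self, zero_smul, smul_zero, smul_zero]

theorem Units.mul_eq_smul_mul_of_conj {K : Aˣ} {X : A} {t : ℂ}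
    (h : (K : A) * X * (↑K⁻¹ : A) = t • X) : (K : A) * X = t • (X * K) := by
  rwa [Units.mul_inv_eq_iff_eq_mul, smul_mul_assoc] at h

theorem Units.inv_mul_eq_smul_mul_of_conj {K : Aˣ} {X : A} {t : ℂ} (ht : t ≠ 0)
    (h : (K : A) * X * (↑K⁻¹ : A) = t • X) : (↑K⁻¹ : A) * X = t⁻¹ • (X * ↑K⁻¹) := by
  have hX : X = t⁻¹ • ((K : A) * X * (↑K⁻¹ : A)) := by rw [h, inv_smul_smul₀ ht]
  conv_lhs => rw [hX, mul_smul_comm, ← mul_assoc, ← mul_assoc, Units.inv_mul, one_mul]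

end

theorem quantum_serre_relations_general {A : Type*} [Ring A] [Algebra ℂ A]
    (q : ℂ) (hq0 : q ≠ 0) (E F : A) (K : Aˣ)
    (hKE : (K : A) * E * (↑K⁻¹ : A) = q ^ 2 • E)
    (hKF : (K : A) * F * (↑K⁻¹ : A) = (q ^ 2)⁻¹ • F)
    (hEF : E * F - F * E = (q - q⁻¹)⁻¹ • ((K : A) - (↑K⁻¹ : A))) :
    qComm (q ^ (-2 : ℤ)) E (E * qComm (q ^ 2) E F - qComm (q ^ 2) E F * E) = 0 ∧
    qComm (q ^ 2) F (F * qComm (q ^ (-2 : ℤ)) F E - qComm (q ^ (-2 : ℤ)) F E * F) = 0 := by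
  have ht : q ^ 2 ≠ 0 := pow_ne_zero 2 hq0
  have hFE : F * E - E * F = (-(q - q⁻¹)⁻¹) • ((K : A) - (↑K⁻¹ : A)) := by
    rw [← neg_sub, hEF, neg_smul]
  have hzpow : q ^ (-2 : ℤ) = (q ^ 2)⁻¹ := by rw [zpow_neg, zpow_ofNat]
  rw [hzpow]
  refine ⟨qComm_qComm_commutator_eq_zero ht (Units.mul_eq_smul_mul_of_conj hKE)
    (Units.inv_mul_eq_smul_mul_of_conj ht hKE) hEF, ?_⟩
  simpa only [inv_inv] using qComm_qComm_commutator_eq_zero (inv_ne_zero ht)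
    (Units.mul_eq_smul_mul_of_conj hKF) (Units.inv_mul_eq_smul_mul_of_conj (inv_ne_zero ht) hKF)
    hFE

/-- The quantum Serre relations of the affine algebra hold under the evaluation map
to `U_q(sl₂)`: `[E, [E, [E, F]_{q²}]]_{q⁻²} = 0` and `[F, [F, [F, E]_{q⁻²}]]_{q²} = 0`,
where the middle bracket is the ordinary commutator. -/
theorem quantum_serre_relations {A : Type*} [Ring A] [Algebra ℂ A]
    (q : ℂ) (hq0 : q ≠ 0) (hq2 : q ^ 2 ≠ 1) (E F : A) (K : Aˣ)
    (hKE : (K : A) * E * (↑K⁻¹ : A) = q ^ 2 • E)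
    (hKF : (K : A) * F * (↑K⁻¹ : A) = (q ^ 2)⁻¹ • F)
    (hEF : E * F - F * E = (q - q⁻¹)⁻¹ • ((K : A) - (↑K⁻¹ : A))) :
    qComm (q ^ (-2 : ℤ)) E (E * qComm (q ^ 2) E F - qComm (q ^ 2) E F * E) = 0 ∧
    qComm (q ^ 2) F (F * qComm (q ^ (-2 : ℤ)) F E - qComm (q ^ (-2 : ℤ)) F E * F) = 0 :=
  quantum_serre_relations_general q hq0 E F K hKE hKF hEF
end

section
/- The evaluated generators of the triangular q-Onsager algebra satisfy the q-commutation relation [T₁, T₀]_{q⁻²} = ε₊ε₋(1 − q⁻²)·1, where T₀ = k₊·q·x^{s₁}·E·K + ε₊·K and T₁ = k₊·x^{−s₀}·E + ε₋·K⁻¹, for any nonzero x ∈ ℂ, integers s₀, s₁, and scalars k₊, ε₊, ε₋ ∈ ℂ. -/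
theorem Units.mul_eq_smul_mul_of_conj_eq_smul {R A : Type*} [CommSemiring R] [Semiring A]
    [Algebra R A] {K : Aˣ} {E : A} {c : R} (h : (K : A) * E * ↑K⁻¹ = c • E) :
    (K : A) * E = c • (E * K) := by
  rw [← smul_mul_assoc, ← h, mul_assoc, Units.inv_mul, mul_one]

/-- Moving `K` past `E` turns every term containing `E` into a multiple of `1 - p c = 0`; only
`ε₋ε₊ (K⁻¹ K - p K K⁻¹)` survives. -/
theorem qComm_smul_add_smul_units_inv {A : Type*} [Ring A] [Algebra ℂ A] {p c : ℂ}
    (hpc : p * c = 1) {E : A} {K : Aˣ} (hKE : (K : A) * E = c • (E * K)) (a b εp εm : ℂ) :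
    qComm p (a • E + εm • (↑K⁻¹ : A)) (b • (E * (K : A)) + εp • (K : A))
      = (εp * εm * (1 - p)) • (1 : A) := by
  have hKinvEK : (↑K⁻¹ : A) * (E * K) = p • E := by
    calc (↑K⁻¹ : A) * (E * K) = (p * c) • ((↑K⁻¹ : A) * (E * K)) := by rw [hpc, one_smul]
      _ = p • ((↑K⁻¹ : A) * (K * E)) := by rw [hKE, mul_smul, mul_smul_comm]
      _ = p • E := by rw [← mul_assoc, Units.inv_mul, one_mul]
  simp only [qComm, add_mul, mul_add, smul_mul_assoc, mul_smul_comm, mul_assoc, hKE, hKinvEK,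
    Units.inv_mul, Units.mul_inv, mul_one, smul_smul]
  match_scalars
  · linear_combination (-a * b) * hpc
  · ring
  · linear_combination (-a * εp) * hpc
  · ring

theorem triangular_qOnsager_qcomm_general {A : Type*} [Ring A] [Algebra ℂ A]
    (q : ℂ) (hq0 : q ≠ 0) (E : A) (K : Aˣ)
    (hKE : (K : A) * E * (↑K⁻¹ : A) = q ^ 2 • E)
    (x : ℂ) (s₀ s₁ : ℤ) (kp εp εm : ℂ) :
    qComm (q ^ (-2 : ℤ))
        ((kp * x ^ (-s₀)) • E + εm • (↑K⁻¹ : A))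
        ((kp * q * x ^ s₁) • (E * (K : A)) + εp • (K : A))
      = (εp * εm * (1 - q ^ (-2 : ℤ))) • (1 : A) := by
  have hpc : q ^ (-2 : ℤ) * q ^ 2 = 1 := by
    rw [zpow_neg, zpow_ofNat, inv_mul_cancel₀ (pow_ne_zero 2 hq0)]
  exact qComm_smul_add_smul_units_inv hpc (Units.mul_eq_smul_mul_of_conj_eq_smul hKE) _ _ _ _

/-- The evaluated generators of the triangular q-Onsager algebra satisfy
`[T₁, T₀]_{q⁻²} = ε₊ε₋(1 − q⁻²)·1`. -/
theorem triangular_qOnsager_qcomm {A : Type*} [Ring A] [Algebra ℂ A]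
    (q : ℂ) (hq0 : q ≠ 0) (hq2 : q ^ 2 ≠ 1) (E F : A) (K : Aˣ)
    (hKE : (K : A) * E * (↑K⁻¹ : A) = q ^ 2 • E)
    (hKF : (K : A) * F * (↑K⁻¹ : A) = (q ^ 2)⁻¹ • F)
    (hEF : E * F - F * E = (q - q⁻¹)⁻¹ • ((K : A) - (↑K⁻¹ : A)))
    (x : ℂ) (hx : x ≠ 0) (s₀ s₁ : ℤ) (kp εp εm : ℂ) :
    qComm (q ^ (-2 : ℤ))
        ((kp * x ^ (-s₀)) • E + εm • (↑K⁻¹ : A))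
        ((kp * q * x ^ s₁) • (E * (K : A)) + εp • (K : A))
      = (εp * εm * (1 - q ^ (-2 : ℤ))) • (1 : A) :=
  triangular_qOnsager_qcomm_general q hq0 E K hKE x s₀ s₁ kp εp εm
end

section
/- The q-deformed Hadamard formula holds for nilpotent conjugating elements: if A, B are elements of an associative unital ℂ-algebra with A^N = 0, and one defines B₀ = B and B_{k+1} = A·B_k − q^k·B_k·A, then B_k = 0 for all k ≥ 2N − 1, and exp_q(A)·B = (Σ_{k=0}^{2N−2} B_k/(k)_q!)·exp_q(A). -/
/-- The q-number `(k)_q = (1 − q^k)/(1 − q)`. -/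
noncomputable def qNum (q : ℂ) (k : ℕ) : ℂ := (1 - q ^ k) / (1 - q)

/-- The q-factorial `(k)_q! = (1)_q(2)_q⋯(k)_q`, with `(0)_q! = 1`. -/
noncomputable def qFact (q : ℂ) : ℕ → ℂ
  | 0 => 1
  | k + 1 => qFact q k * qNum q (k + 1)

/-- The (truncated) q-exponential `exp_q(a) = Σ_{k=0}^{N−1} a^k/(k)_q!` of a nilpotent
element with `a^N = 0`. -/
noncomputable def expq {A : Type*} [Ring A] [Algebra ℂ A] (q : ℂ) (N : ℕ) (a : A) : A :=
  ∑ k ∈ Finset.range N, (qFact q k)⁻¹ • a ^ k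

lemma qFact_succ (q : ℂ) (k : ℕ) : qFact q (k + 1) = qFact q k * qNum q (k + 1) := rfl

/-- Gaussian binomial via Pascal recurrence. -/
noncomputable def qb (q : ℂ) : ℕ → ℕ → ℂ
  | 0, 0 => 1
  | 0, _ + 1 => 0
  | _ + 1, 0 => 1
  | n + 1, k + 1 => qb q n k + q ^ (k + 1) * qb q n (k + 1)

lemma qb_zero (q : ℂ) (n : ℕ) : qb q n 0 = 1 := by cases n <;> rfl

lemma qb_succ_succ (q : ℂ) (n k : ℕ) :
    qb q (n + 1) (k + 1) = qb q n k + q ^ (k + 1) * qb q n (k + 1) := rfl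

lemma qb_of_gt (q : ℂ) : ∀ n k, n < k → qb q n k = 0 := by
  intro n
  induction n with
  | zero => intro k hk; match k, hk with
    | k + 1, _ => rfl
  | succ n ih =>
    intro k hk
    match k, hk with
    | k + 1, hk =>
      rw [qb_succ_succ, ih k (by omega), ih (k + 1) (by omega)]
      ring

section
variable (q : ℂ) (hq : ∀ k : ℕ, 0 < k → q ^ k ≠ 1)
include hq

lemma qNum_ne_zero (k : ℕ) (hk : 0 < k) : qNum q k ≠ 0 := by
  have h1 : q ^ k ≠ 1 := hq k hk
  have h2 : (1 : ℂ) - q ≠ 0 := by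
    have := hq 1 one_pos; simpa [sub_ne_zero] using fun h => this (by rw [pow_one, h])
  simp only [qNum, div_ne_zero_iff, sub_ne_zero]
  exact ⟨fun h => h1 h.symm, fun h => h2 (by rw [h, sub_self])⟩

lemma qFact_ne_zero (k : ℕ) : qFact q k ≠ 0 := by
  induction k with
  | zero => simp [qFact]
  | succ n ih =>
    rw [qFact_succ]
    exact mul_ne_zero ih (qNum_ne_zero q hq (n + 1) (Nat.succ_pos n))

lemma qNum_pascal (n k : ℕ) (h : k < n) :
    qNum q (k + 1) + q ^ (k + 1) * qNum q (n - k) = qNum q (n + 1) := by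
  have h2 : (1 : ℂ) - q ≠ 0 := by
    have := hq 1 one_pos; simpa [sub_ne_zero] using fun hh => this (by rw [pow_one, hh])
  have hnk : k + 1 + (n - k) = n + 1 := by omega
  have hpow : q ^ (k + 1) * q ^ (n - k) = q ^ (n + 1) := by
    rw [← pow_add, hnk]
  simp only [qNum]
  field_simp
  linear_combination -hpow

lemma qb_fact : ∀ n k, k ≤ n → qb q n k * (qFact q k * qFact q (n - k)) = qFact q n := by
  intro n
  induction n with
  | zero => intro k hk
            interval_cases k
            simp [qb_zero, qFact]
  | succ n ih =>
    intro k hk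
    match k with
    | 0 => simp [qb_zero, qFact]
    | k + 1 =>
      rcases Nat.lt_or_ge k n with h | h
      · -- k + 1 ≤ n
        have IH1 := ih k (le_of_lt h)
        have IH2 := ih (k + 1) h
        have e1 : qFact q (n - k) = qFact q (n - (k + 1)) * qNum q (n - k) := by
          rw [show n - k = (n - (k + 1)) + 1 from by omega, qFact_succ,
            show n - (k + 1) + 1 = n - k from by omega]
        have P := qNum_pascal q hq n k h
        rw [e1] at IH1
        rw [qFact_succ] at IH2
        rw [qb_succ_succ, qFact_succ (q := q) (k := k), qFact_succ (q := q) (k := n),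
          show n + 1 - (k + 1) = (n - (k + 1)) + 1 from by omega, qFact_succ,
          show n - (k + 1) + 1 = n - k from by omega]
        linear_combination (qNum q (k + 1)) * IH1 + (q ^ (k + 1) * qNum q (n - k)) * IH2 +
          (qFact q n) * P
      · -- k = n
        have hkn : k = n := by omega
        subst hkn
        have IH := ih k le_rfl
        simp only [Nat.sub_self, qFact] at IH
        have hk1 : qb q k k = 1 := by
          have := qFact_ne_zero q hq k
          field_simp at IH
          exact IH
        rw [qb_succ_succ, qb_of_gt q k (k + 1) (by omega), hk1]
        simp [qFact]

lemma qb_coeff (n k : ℕ) (h : k ≤ n) :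
    (qFact q n)⁻¹ * qb q n k = (qFact q k)⁻¹ * (qFact q (n - k))⁻¹ := by
  have h1 := qFact_ne_zero q hq n
  have h2 := qFact_ne_zero q hq k
  have h3 := qFact_ne_zero q hq (n - k)
  have := qb_fact q hq n k h
  field_simp
  linear_combination this

end


/-- The q-deformed Hadamard formula for nilpotent conjugating elements: if `A^N = 0` and
`B₀ = B`, `B_{k+1} = A·B_k − q^k·B_k·A`, then `B_k = 0` for `k ≥ 2N − 1` and
`exp_q(A)·B = (Σ_{k=0}^{2N−2} B_k/(k)_q!)·exp_q(A)`. -/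
theorem q_hadamard_formula {R : Type*} [Ring R] [Algebra ℂ R]
    (q : ℂ) (hq : ∀ k : ℕ, 0 < k → q ^ k ≠ 1)
    (N : ℕ) (a b : R) (ha : a ^ N = 0)
    (B : ℕ → R) (hB0 : B 0 = b)
    (hBrec : ∀ k : ℕ, B (k + 1) = a * B k - q ^ k • (B k * a)) :
    (∀ k : ℕ, 2 * N - 1 ≤ k → B k = 0) ∧
    expq q N a * b = (∑ k ∈ Finset.range (2 * N - 1), (qFact q k)⁻¹ • B k) * expq q N a := by
  rcases Nat.eq_zero_or_pos N with hN | hN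
  · subst hN
    have h1 : (1 : R) = 0 := by simpa using ha
    have hsub : Subsingleton R := subsingleton_of_zero_eq_one h1.symm
    exact ⟨fun k _ => Subsingleton.elim _ _, Subsingleton.elim _ _⟩
  -- representation of B k
  have Brep : ∀ k, ∃ c : ℕ → ℂ, B k = ∑ i ∈ Finset.range (k + 1),
      c i • (a ^ i * b * a ^ (k - i)) := by
    intro k
    induction k with
    | zero => exact ⟨fun _ => 1, by simp [hB0]⟩
    | succ k ih =>
      obtain ⟨c, hc⟩ := ih
      refine ⟨fun j => (if 1 ≤ j then c (j - 1) else 0) -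
        q ^ k * (if j ≤ k then c j else 0), ?_⟩
      have hA : a * (∑ i ∈ Finset.range (k + 1), c i • (a ^ i * b * a ^ (k - i)))
          = ∑ j ∈ Finset.range (k + 2),
            (if 1 ≤ j then c (j - 1) else 0) • (a ^ j * b * a ^ (k + 1 - j)) := by
        rw [Finset.mul_sum]
        conv_rhs => rw [Finset.sum_range_succ']
        rw [if_neg (by omega : ¬ (1:ℕ) ≤ 0)]
        simp only [zero_smul, add_zero, Nat.succ_sub_succ_eq_sub, Nat.add_sub_cancel]
        refine Finset.sum_congr rfl fun i hi => ?_
        rw [if_pos (Nat.succ_le_succ (Nat.zero_le i)), mul_smul_comm]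
        congr 1
        rw [← mul_assoc, ← mul_assoc, ← pow_succ']
      have hBb : (∑ i ∈ Finset.range (k + 1), c i • (a ^ i * b * a ^ (k - i))) * a
          = ∑ j ∈ Finset.range (k + 2),
            (if j ≤ k then c j else 0) • (a ^ j * b * a ^ (k + 1 - j)) := by
        rw [Finset.sum_mul]
        conv_rhs => rw [Finset.sum_range_succ]
        rw [if_neg (by omega : ¬ k + 1 ≤ k)]
        simp only [zero_smul, add_zero]
        refine Finset.sum_congr rfl fun i hi => ?_
        have hi' : i ≤ k := Nat.lt_succ_iff.mp (Finset.mem_range.mp hi)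
        rw [if_pos hi', smul_mul_assoc]
        congr 1
        rw [mul_assoc, ← pow_succ, show k - i + 1 = k + 1 - i from by omega]
      rw [hBrec k, hc, hA, hBb, Finset.smul_sum, ← Finset.sum_sub_distrib]
      refine Finset.sum_congr rfl fun j _ => ?_
      rw [sub_smul, smul_smul]
  have part1 : ∀ k : ℕ, 2 * N - 1 ≤ k → B k = 0 := by
    intro k hk
    obtain ⟨c, hc⟩ := Brep k
    rw [hc]
    refine Finset.sum_eq_zero fun i hi => ?_
    rcases le_or_gt N i with h | h
    · have : a ^ i = 0 := pow_eq_zero_of_le h ha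
      simp [this]
    · have : a ^ (k - i) = 0 := pow_eq_zero_of_le (by omega) ha
      simp [this]
  refine ⟨part1, ?_⟩
  -- key commutation formula
  have key : ∀ n, a ^ n * b = ∑ k ∈ Finset.range (n + 1), qb q n k • (B k * a ^ (n - k)) := by
    intro n
    induction n with
    | zero => simp [hB0, qb_zero]
    | succ n ih =>
      have ha' : ∀ k, a * B k = B (k + 1) + q ^ k • (B k * a) := by
        intro k; rw [hBrec k, sub_add_cancel]
      calc a ^ (n + 1) * b = a * (a ^ n * b) := by rw [pow_succ', mul_assoc]
        _ = ∑ k ∈ Finset.range (n + 1), qb q n k • (a * B k * a ^ (n - k)) := by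
            rw [ih, Finset.mul_sum]
            exact Finset.sum_congr rfl fun k _ => by rw [mul_smul_comm, mul_assoc]
        _ = (∑ k ∈ Finset.range (n + 1), qb q n k • (B (k + 1) * a ^ (n - k)))
            + ∑ k ∈ Finset.range (n + 1), (q ^ k * qb q n k) • (B k * a ^ (n + 1 - k)) := by
            rw [← Finset.sum_add_distrib]
            refine Finset.sum_congr rfl fun k hk => ?_
            have hk' : k ≤ n := Nat.lt_succ_iff.mp (Finset.mem_range.mp hk)
            rw [show n + 1 - k = (n - k) + 1 from by omega]
            rw [ha' k, add_mul, smul_add]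
            congr 1
            rw [smul_mul_assoc, smul_smul, mul_comm (qb q n k) (q ^ k)]
            congr 1
            rw [mul_assoc, ← pow_succ']
        _ = ∑ k ∈ Finset.range (n + 1 + 1), qb q (n + 1) k • (B k * a ^ (n + 1 - k)) := by
            rw [Finset.sum_range_succ' (fun k => qb q (n + 1) k • (B k * a ^ (n + 1 - k))) (n + 1)]
            rw [Finset.sum_range_succ' (fun k => (q ^ k * qb q n k) • (B k * a ^ (n + 1 - k))) n]
            simp only [qb_succ_succ, qb_zero, Nat.succ_sub_succ_eq_sub, Nat.sub_zero,
              pow_zero, one_mul, one_smul, add_smul, Finset.sum_add_distrib]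
            rw [Finset.sum_range_succ
              (fun i => (q ^ (i + 1) * qb q n (i + 1)) • (B (i + 1) * a ^ (n - i))) n]
            rw [qb_of_gt q n (n + 1) (by omega)]
            simp only [mul_zero, zero_smul, add_zero]
            abel
  have hterm : ∀ n, (qFact q n)⁻¹ • (a ^ n * b) =
      ∑ k ∈ Finset.range (n + 1),
        ((qFact q k)⁻¹ * (qFact q (n - k))⁻¹) • (B k * a ^ (n - k)) := by
    intro n
    rw [key n, Finset.smul_sum]
    refine Finset.sum_congr rfl fun k hk => ?_
    rw [smul_smul, qb_coeff q hq n k (Nat.lt_succ_iff.mp (Finset.mem_range.mp hk))]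
  have hLHS : expq q N a * b = ∑ n ∈ Finset.range (3 * N), (qFact q n)⁻¹ • (a ^ n * b) := by
    have h1 : expq q N a * b = ∑ n ∈ Finset.range N, (qFact q n)⁻¹ • (a ^ n * b) := by
      rw [expq, Finset.sum_mul]
      exact Finset.sum_congr rfl fun n _ => smul_mul_assoc _ _ _
    rw [h1]
    refine Finset.sum_subset (Finset.range_subset_range.mpr (by omega)) fun n _ hn => ?_
    have hn' : N ≤ n := le_of_not_gt fun h => hn (Finset.mem_range.mpr h)
    have : a ^ n = 0 := pow_eq_zero_of_le hn' ha
    simp [this]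
  have hRHS : (∑ k ∈ Finset.range (2 * N - 1), (qFact q k)⁻¹ • B k) * expq q N a
      = ∑ m ∈ Finset.range (2 * N - 1), ∑ k ∈ Finset.range N,
        ((qFact q m)⁻¹ * (qFact q k)⁻¹) • (B m * a ^ k) := by
    rw [expq, Finset.sum_mul_sum]
    refine Finset.sum_congr rfl fun m _ => Finset.sum_congr rfl fun k _ => ?_
    rw [smul_mul_assoc, mul_smul_comm, smul_smul]
  rw [hLHS, hRHS]
  calc ∑ n ∈ Finset.range (3 * N), (qFact q n)⁻¹ • (a ^ n * b)
      = ∑ n ∈ Finset.range (3 * N), ∑ k ∈ Finset.range (n + 1),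
          ((qFact q k)⁻¹ * (qFact q (n - k))⁻¹) • (B k * a ^ (n - k)) :=
        Finset.sum_congr rfl fun n _ => hterm n
    _ = ∑ m ∈ Finset.range (3 * N), ∑ k ∈ Finset.range (3 * N - m),
          ((qFact q m)⁻¹ * (qFact q k)⁻¹) • (B m * a ^ k) :=
        Finset.sum_range_diag_flip (3 * N)
          (fun m k => ((qFact q m)⁻¹ * (qFact q k)⁻¹) • (B m * a ^ k))
    _ = ∑ m ∈ Finset.range (2 * N - 1), ∑ k ∈ Finset.range (3 * N - m),
          ((qFact q m)⁻¹ * (qFact q k)⁻¹) • (B m * a ^ k) := by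
        symm
        refine Finset.sum_subset (Finset.range_subset_range.mpr (by omega)) fun m _ hm => ?_
        have hm' : 2 * N - 1 ≤ m := le_of_not_gt fun h => hm (Finset.mem_range.mpr h)
        refine Finset.sum_eq_zero fun k _ => by rw [part1 m hm']; simp
    _ = ∑ m ∈ Finset.range (2 * N - 1), ∑ k ∈ Finset.range N,
          ((qFact q m)⁻¹ * (qFact q k)⁻¹) • (B m * a ^ k) := by
        refine Finset.sum_congr rfl fun m hm => ?_
        have hm' : m < 2 * N - 1 := Finset.mem_range.mp hm
        symm
        refine Finset.sum_subset (Finset.range_subset_range.mpr (by omega)) fun k _ hk => ?_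
        have hk' : N ≤ k := le_of_not_gt fun h => hk (Finset.mem_range.mpr h)
        have : a ^ k = 0 := pow_eq_zero_of_le hk' ha
        simp [this]
end

section
/- Conjugation of a Cartan power by a q-exponential of E·K^b expands as follows: if E^N = 0, then for all a ∈ ℂ and b, c ∈ ℤ, exp_{q⁻²}(a·E·K^b)·K^c = (Σ_{j=0}^{N−1} ((q^{2c}; q⁻²)_j / (q⁻²; q⁻²)_j)·(a(1 − q⁻²))^j·(E·K^b)^j·K^c)·exp_{q⁻²}(a·E·K^b). -/
/-- The q-Pochhammer symbol `(y; p)_j = ∏_{i=0}^{j−1}(1 − y·p^i)`. -/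
noncomputable def qPoch (y p : ℂ) (j : ℕ) : ℂ := ∏ i ∈ Finset.range j, (1 - y * p ^ i)

lemma qPoch_zero (y p : ℂ) : qPoch y p 0 = 1 := by simp [qPoch]

lemma qPoch_succ (y p : ℂ) (j : ℕ) : qPoch y p (j + 1) = qPoch y p j * (1 - y * p ^ j) := by
  simp [qPoch, Finset.prod_range_succ]

lemma qPoch_pp_succ (p : ℂ) (j : ℕ) : qPoch p p (j + 1) = qPoch p p j * (1 - p ^ (j + 1)) := by
  rw [qPoch_succ, pow_succ']

lemma qPoch_pp_ne_zero (p : ℂ) (hp : ∀ i : ℕ, 0 < i → p ^ i ≠ 1) (j : ℕ) :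
    qPoch p p j ≠ 0 := by
  induction j with
  | zero => simp [qPoch]
  | succ n ih =>
    rw [qPoch_pp_succ]
    exact mul_ne_zero ih (sub_ne_zero.mpr fun h => hp (n+1) (Nat.succ_pos n) h.symm)

lemma qFact_eq (p : ℂ) (k : ℕ) : qFact p k = qPoch p p k / (1 - p) ^ k := by
  induction k with
  | zero => simp [qFact, qPoch]
  | succ n ih =>
    show qFact p n * qNum p (n+1) = _
    rw [ih, qNum, qPoch_pp_succ, pow_succ (1-p), div_mul_div_comm]

lemma qFact_inv (p : ℂ) (k : ℕ) : (qFact p k)⁻¹ = (1 - p) ^ k / qPoch p p k := by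
  rw [qFact_eq, inv_div]

private lemma aux1 (t w c ym d1 d2 : ℂ) (ht : t ≠ 0) (hd1 : d1 ≠ 0) (hd2 : d2 ≠ 0) :
    t * (c * (1 - w) * ym / (d1 * t * d2)) = c * ym / (d1 * d2) - w * (c * ym / (d1 * d2)) := by
  field_simp

private lemma aux2 (pj t c ym y d1 d2 : ℂ) (ht : t ≠ 0) (hd1 : d1 ≠ 0) (hd2 : d2 ≠ 0) :
    pj * t * (c * (ym * y) / (d1 * (d2 * t))) = y * pj * (c * ym / (d1 * d2)) := by
  field_simp

lemma rothe (p y : ℂ) (hp : ∀ i : ℕ, 0 < i → p ^ i ≠ 1) (n : ℕ) :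
    ∑ jm ∈ Finset.HasAntidiagonal.antidiagonal n,
      qPoch y p jm.1 * y ^ jm.2 / (qPoch p p jm.1 * qPoch p p jm.2)
      = 1 / qPoch p p n := by
  have dne := qPoch_pp_ne_zero p hp
  induction n with
  | zero => simp [qPoch]
  | succ n ih =>
    have h1 : (1 - p ^ (n + 1)) ≠ 0 :=
      sub_ne_zero.mpr fun h => hp (n+1) (Nat.succ_pos n) h.symm
    have key : (1 - p ^ (n + 1)) * ∑ jm ∈ Finset.HasAntidiagonal.antidiagonal (n+1),
        qPoch y p jm.1 * y ^ jm.2 / (qPoch p p jm.1 * qPoch p p jm.2)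
        = 1 / qPoch p p n := by
      rw [Finset.mul_sum]
      have step1 : ∑ jm ∈ Finset.HasAntidiagonal.antidiagonal (n+1),
          (1 - p ^ (n + 1)) * (qPoch y p jm.1 * y ^ jm.2 / (qPoch p p jm.1 * qPoch p p jm.2))
          = ∑ jm ∈ Finset.HasAntidiagonal.antidiagonal (n+1),
            ((1 - p ^ jm.1) * (qPoch y p jm.1 * y ^ jm.2 / (qPoch p p jm.1 * qPoch p p jm.2))
             + p ^ jm.1 * (1 - p ^ jm.2) *
                (qPoch y p jm.1 * y ^ jm.2 / (qPoch p p jm.1 * qPoch p p jm.2))) := by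
        refine Finset.sum_congr rfl fun jm hjm => ?_
        have hm := (Finset.HasAntidiagonal.mem_antidiagonal (n := n + 1)).mp hjm
        rw [← hm, pow_add]; ring
      rw [step1, Finset.sum_add_distrib]
      rw [Finset.Nat.sum_antidiagonal_succ
        (f := fun jm => (1 - p ^ jm.1) * (qPoch y p jm.1 * y ^ jm.2 / (qPoch p p jm.1 * qPoch p p jm.2)))]
      rw [Finset.Nat.sum_antidiagonal_succ'
        (f := fun jm => p ^ jm.1 * (1 - p ^ jm.2) * (qPoch y p jm.1 * y ^ jm.2 / (qPoch p p jm.1 * qPoch p p jm.2)))]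
      simp only [pow_zero, sub_self, zero_mul, mul_zero, zero_add]
      have e1 : ∀ jm : ℕ × ℕ, jm ∈ Finset.HasAntidiagonal.antidiagonal n →
          (1 - p ^ (jm.1 + 1)) * (qPoch y p (jm.1 + 1) * y ^ jm.2 /
            (qPoch p p (jm.1 + 1) * qPoch p p jm.2))
          = qPoch y p jm.1 * y ^ jm.2 / (qPoch p p jm.1 * qPoch p p jm.2)
            - y * p ^ jm.1 * (qPoch y p jm.1 * y ^ jm.2 / (qPoch p p jm.1 * qPoch p p jm.2)) := by
        intro jm _
        have ht : (1 - p ^ (jm.1 + 1)) ≠ 0 :=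
          sub_ne_zero.mpr fun h => hp (jm.1+1) (Nat.succ_pos _) h.symm
        rw [qPoch_succ, qPoch_pp_succ]
        exact aux1 _ _ _ _ _ _ ht (dne _) (dne _)
      have e2 : ∀ jm : ℕ × ℕ, jm ∈ Finset.HasAntidiagonal.antidiagonal n →
          p ^ jm.1 * (1 - p ^ (jm.2 + 1)) * (qPoch y p jm.1 * y ^ (jm.2 + 1) /
            (qPoch p p jm.1 * qPoch p p (jm.2 + 1)))
          = y * p ^ jm.1 * (qPoch y p jm.1 * y ^ jm.2 / (qPoch p p jm.1 * qPoch p p jm.2)) := by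
        intro jm _
        have ht : (1 - p ^ (jm.2 + 1)) ≠ 0 :=
          sub_ne_zero.mpr fun h => hp (jm.2+1) (Nat.succ_pos _) h.symm
        rw [qPoch_pp_succ, pow_succ]
        exact aux2 _ _ _ _ _ _ _ ht (dne _) (dne _)
      rw [Finset.sum_congr rfl e1, Finset.sum_congr rfl e2, Finset.sum_sub_distrib]
      rw [sub_add_cancel]
      exact ih
    rw [qPoch_pp_succ]
    rw [eq_div_iff (mul_ne_zero (dne n) h1)]
    calc (∑ jm ∈ Finset.HasAntidiagonal.antidiagonal (n+1),
            qPoch y p jm.1 * y ^ jm.2 / (qPoch p p jm.1 * qPoch p p jm.2))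
          * (qPoch p p n * (1 - p ^ (n + 1)))
        = ((1 - p ^ (n + 1)) * ∑ jm ∈ Finset.HasAntidiagonal.antidiagonal (n+1),
            qPoch y p jm.1 * y ^ jm.2 / (qPoch p p jm.1 * qPoch p p jm.2)) * qPoch p p n := by
          ring
      _ = 1 := by rw [key, one_div, inv_mul_cancel₀ (dne n)]

lemma coeff (p y a : ℂ) (hp : ∀ i : ℕ, 0 < i → p ^ i ≠ 1) (k : ℕ) :
    ∑ jm ∈ Finset.HasAntidiagonal.antidiagonal k,
      qPoch y p jm.1 / qPoch p p jm.1 * (a * (1 - p)) ^ jm.1 *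
        ((qFact p jm.2)⁻¹ * a ^ jm.2 * y ^ jm.2)
      = (qFact p k)⁻¹ * a ^ k := by
  have dne := qPoch_pp_ne_zero p hp
  have e : ∀ jm ∈ Finset.HasAntidiagonal.antidiagonal k,
      qPoch y p jm.1 / qPoch p p jm.1 * (a * (1 - p)) ^ jm.1 *
        ((qFact p jm.2)⁻¹ * a ^ jm.2 * y ^ jm.2)
      = (a ^ k * (1 - p) ^ k) *
          (qPoch y p jm.1 * y ^ jm.2 / (qPoch p p jm.1 * qPoch p p jm.2)) := by
    intro jm hjm
    have hm := (Finset.HasAntidiagonal.mem_antidiagonal (n := k)).mp hjm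
    rw [qFact_inv, ← hm, mul_pow, pow_add a, pow_add (1 - p)]
    field_simp
  rw [Finset.sum_congr rfl e, ← Finset.mul_sum, rothe p y hp k, qFact_inv]
  field_simp

lemma zq2 (q : ℂ) : q ^ (2:ℤ) = q ^ 2 := by
  rw [show (2:ℤ) = ((2:ℕ):ℤ) from rfl, zpow_natCast]

private lemma Kpow_mul_E {A : Type*} [Ring A] [Algebra ℂ A] (q : ℂ) (hq0 : q ≠ 0)
    (E : A) (K : Aˣ) (hKE : (K:A) * E * (↑K⁻¹:A) = q^2 • E) (m : ℤ) :
    (↑(K ^ m) : A) * E = (q ^ (2*m) : ℂ) • (E * ↑(K ^ m)) := by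
  have hKE1 : (K:A) * E = q^2 • (E * (K:A)) := by
    have h := congrArg (fun x => x * (K:A)) hKE
    simpa [mul_assoc, Units.inv_mul, smul_mul_assoc] using h
  have hKE2 : (↑K⁻¹:A) * E = ((q^2)⁻¹ : ℂ) • (E * (↑K⁻¹:A)) := by
    have h := congrArg (fun x => (↑K⁻¹:A) * x * (↑K⁻¹:A)) hKE1
    simp only [mul_assoc, Units.inv_mul_cancel_left, mul_smul_comm, smul_mul_assoc,
      Units.mul_inv, mul_one] at h
    rw [h, smul_smul, inv_mul_cancel₀ (pow_ne_zero 2 hq0), one_smul]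
  induction m using Int.induction_on with
  | zero => simp
  | succ n ih =>
    have h1 : (↑(K ^ ((n:ℤ)+1)) : A) * E = ↑(K^(n:ℤ)) * ((K:A) * E) := by
      rw [zpow_add_one, Units.val_mul, mul_assoc]
    rw [h1, hKE1, mul_smul_comm, ← mul_assoc, ih, smul_mul_assoc, smul_smul]
    have h2 : q ^ (2*((n:ℤ)+1)) = q ^ 2 * q ^ (2*(n:ℤ)) := by
      rw [show 2*((n:ℤ)+1) = (2:ℤ) + 2*(n:ℤ) by ring, zpow_add₀ hq0, zq2]
    rw [h2, zpow_add_one, Units.val_mul, mul_assoc]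
  | pred n ih =>
    have h1 : (↑(K ^ (-(n:ℤ)-1)) : A) * E = ↑(K^(-(n:ℤ))) * ((↑K⁻¹:A) * E) := by
      rw [zpow_sub_one, Units.val_mul, mul_assoc]
    rw [h1, hKE2, mul_smul_comm, ← mul_assoc, ih, smul_mul_assoc, smul_smul]
    have h2 : q ^ (2*(-(n:ℤ)-1)) = (q ^ 2)⁻¹ * q ^ (2*(-(n:ℤ))) := by
      rw [show 2*(-(n:ℤ)-1) = (-2:ℤ) + 2*(-(n:ℤ)) by ring, zpow_add₀ hq0,
        show (-2:ℤ) = -((2:ℕ):ℤ) from rfl, zpow_neg, zpow_natCast]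
    rw [h2, zpow_sub_one, Units.val_mul, mul_assoc]

private lemma triangle_sum {M : Type*} [AddCommMonoid M] (N : ℕ) (f : ℕ × ℕ → M)
    (hf : ∀ jm : ℕ × ℕ, N ≤ jm.1 + jm.2 → f jm = 0) :
    ∑ j ∈ Finset.range N, ∑ m ∈ Finset.range N, f (j, m)
      = ∑ k ∈ Finset.range N, ∑ jm ∈ Finset.HasAntidiagonal.antidiagonal k, f jm := by
  rw [← Finset.sum_product']
  have hdisj : ((Finset.range N : Finset ℕ) : Set ℕ).PairwiseDisjoint Finset.HasAntidiagonal.antidiagonal := by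
    intro k₁ _ k₂ _ hne
    simp only [Finset.disjoint_left]
    intro jm h1 h2
    exact hne ((Finset.HasAntidiagonal.mem_antidiagonal.mp h1).symm.trans (Finset.HasAntidiagonal.mem_antidiagonal.mp h2))
  rw [← Finset.sum_biUnion hdisj]
  have hsub : (Finset.range N).biUnion Finset.HasAntidiagonal.antidiagonal ⊆ Finset.range N ×ˢ Finset.range N := by
    intro jm h
    obtain ⟨k, hk, hjm⟩ := Finset.mem_biUnion.mp h
    have hs := Finset.HasAntidiagonal.mem_antidiagonal.mp hjm
    have hkN := Finset.mem_range.mp hk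
    exact Finset.mem_product.mpr ⟨Finset.mem_range.mpr (by omega), Finset.mem_range.mpr (by omega)⟩
  refine (Finset.sum_subset hsub ?_).symm
  intro jm _ hnot
  refine hf jm ?_
  by_contra h
  push_neg at h
  exact hnot (Finset.mem_biUnion.mpr ⟨jm.1 + jm.2, Finset.mem_range.mpr h,
    Finset.HasAntidiagonal.mem_antidiagonal.mpr rfl⟩)

/-- Conjugation of a Cartan power by a q-exponential of `E·K^b`:
`exp_{q⁻²}(a·E·K^b)·K^c
  = (Σ_{j=0}^{N−1} ((q^{2c}; q⁻²)_j / (q⁻²; q⁻²)_j)·(a(1 − q⁻²))^j·(E·K^b)^j·K^c)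
      ·exp_{q⁻²}(a·E·K^b)`. -/
theorem expq_conj_cartan {A : Type*} [Ring A] [Algebra ℂ A]
    (q : ℂ) (hq : ∀ k : ℕ, 0 < k → q ^ k ≠ 1) (E : A) (K : Aˣ)
    (hKE : (K : A) * E * (↑K⁻¹ : A) = q ^ 2 • E)
    (N : ℕ) (hE : E ^ N = 0) (a : ℂ) (b c : ℤ) :
    expq (q ^ (-2 : ℤ)) N (a • (E * ↑(K ^ b))) * ↑(K ^ c)
      = (∑ j ∈ Finset.range N,
            (qPoch (q ^ (2 * c)) (q ^ (-2 : ℤ)) j / qPoch (q ^ (-2 : ℤ)) (q ^ (-2 : ℤ)) j) •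
              ((a * (1 - q ^ (-2 : ℤ))) ^ j • ((E * ↑(K ^ b)) ^ j * ↑(K ^ c))))
          * expq (q ^ (-2 : ℤ)) N (a • (E * ↑(K ^ b))) := by
  by_cases hE0 : E = 0
  · subst hE0
    rw [zero_mul]
    cases N with
    | zero => simp [expq]
    | succ n =>
      have hexp : expq (q ^ (-2:ℤ)) (n+1) (a • (0:A)) = 1 := by
        rw [smul_zero, expq, Finset.sum_eq_single 0]
        · simp [qFact]
        · intro k _ hk0; simp [zero_pow hk0]
        · intro h; exact absurd (Finset.mem_range.mpr (Nat.succ_pos n)) h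
      have hsum : (∑ j ∈ Finset.range (n+1),
            (qPoch (q ^ (2 * c)) (q ^ (-2 : ℤ)) j / qPoch (q ^ (-2 : ℤ)) (q ^ (-2 : ℤ)) j) •
              ((a * (1 - q ^ (-2 : ℤ))) ^ j • ((0:A) ^ j * ↑(K ^ c))))
          = ↑(K ^ c) := by
        rw [Finset.sum_eq_single 0]
        · simp [qPoch]
        · intro k _ hk0; simp [zero_pow hk0]
        · intro h; exact absurd (Finset.mem_range.mpr (Nat.succ_pos n)) h
      rw [hexp, hsum, one_mul, mul_one]
  · have hq0 : q ≠ 0 := by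
      intro h
      apply hE0
      have h2 : (K:A) * E * ↑K⁻¹ = 0 := by rw [hKE, h]; simp
      have h3 : E = ↑K⁻¹ * ((K:A) * E * ↑K⁻¹) * ↑K := by
        simp [mul_assoc, Units.inv_mul_cancel_left, Units.inv_mul]
      rw [h3, h2, mul_zero, zero_mul]
    set p : ℂ := q ^ (-2:ℤ) with hpdef
    set y : ℂ := q ^ (2*c) with hydef
    set X : A := E * ↑(K^b) with hXdef
    have hp : ∀ i : ℕ, 0 < i → p ^ i ≠ 1 := by
      intro i hi h
      apply hq (2*i) (by positivity)
      have h1 : q ^ ((-2:ℤ) * (i:ℤ)) = 1 := by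
        rw [zpow_mul, zpow_natCast]
        exact h
      rw [show ((-2:ℤ) * (i:ℤ)) = -((2*i:ℕ):ℤ) by push_cast; ring] at h1
      rw [zpow_neg, inv_eq_one, zpow_natCast] at h1
      exact h1
    have hKmE := Kpow_mul_E q hq0 E K hKE
    have hcomm : (↑(K^c):A) * X = y • (X * ↑(K^c)) := by
      calc (↑(K^c):A) * X = ((↑(K^c):A) * E) * ↑(K^b) := by rw [hXdef, mul_assoc]
        _ = (y • (E * ↑(K^c))) * ↑(K^b) := by rw [hKmE c, hydef]
        _ = y • (E * (↑(K^c) * ↑(K^b))) := by rw [smul_mul_assoc, mul_assoc]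
        _ = y • (E * (↑(K^b) * ↑(K^c))) := by
            rw [← Units.val_mul, ← Units.val_mul, ← zpow_add, ← zpow_add, add_comm]
        _ = y • (X * ↑(K^c)) := by rw [hXdef, mul_assoc]
    have hcommPow : ∀ m : ℕ, (↑(K^c):A) * X^m = y^m • (X^m * ↑(K^c)) := by
      intro m
      induction m with
      | zero => simp
      | succ n ih =>
        calc (↑(K^c):A) * X^(n+1) = ((↑(K^c):A) * X^n) * X := by rw [pow_succ, mul_assoc]
          _ = (y^n • (X^n * ↑(K^c))) * X := by rw [ih]
          _ = y^n • (X^n * ((↑(K^c):A) * X)) := by rw [smul_mul_assoc, mul_assoc]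
          _ = y^n • (X^n * (y • (X * ↑(K^c)))) := by rw [hcomm]
          _ = (y^(n+1)) • (X^(n+1) * ↑(K^c)) := by
              rw [mul_smul_comm, smul_smul, ← mul_assoc, ← pow_succ, ← pow_succ]
    have hXN : X^N = 0 := by
      have hEK : ∀ m : ℕ, ∃ s : ℂ, X^m = s • (E^m * ↑(K^(b*(m:ℤ)))) := by
        intro m
        induction m with
        | zero => exact ⟨1, by simp⟩
        | succ n ih =>
          obtain ⟨s, hs⟩ := ih
          refine ⟨s * q ^ (2*(b*(n:ℤ))), ?_⟩
          calc X^(n+1) = X^n * X := pow_succ X n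
            _ = (s • (E^n * ↑(K^(b*(n:ℤ))))) * (E * ↑(K^b)) := by rw [hs, hXdef]
            _ = s • (E^n * ((↑(K^(b*(n:ℤ))):A) * E) * ↑(K^b)) := by
                rw [smul_mul_assoc, mul_assoc, mul_assoc, mul_assoc]
            _ = s • (E^n * ((q ^ (2*(b*(n:ℤ))) : ℂ) • (E * ↑(K^(b*(n:ℤ))))) * ↑(K^b)) := by
                rw [hKmE (b*(n:ℤ))]
            _ = (s * q ^ (2*(b*(n:ℤ)))) • (E^(n+1) * ↑(K^(b*((n:ℤ)+1)))) := by
                rw [mul_smul_comm, smul_mul_assoc, smul_smul]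
                congr 1
                rw [pow_succ E, show b*((n:ℤ)+1) = b*(n:ℤ) + b by ring, zpow_add,
                  Units.val_mul]
                noncomm_ring
          
      obtain ⟨s, hs⟩ := hEK N
      rw [hs, hE, zero_mul, smul_zero]
    have hXge : ∀ m : ℕ, N ≤ m → X^m = 0 := by
      intro m hm
      rw [show m = N + (m - N) by omega, pow_add, hXN, zero_mul]
    -- assembly
    rw [expq]
    simp only [smul_pow]
    rw [Finset.sum_mul, Finset.sum_mul]
    have hL : ∀ k : ℕ, ((qFact p k)⁻¹ • (a^k • X^k)) * ↑(K^c)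
        = ((qFact p k)⁻¹ * a^k) • (X^k * ↑(K^c)) := by
      intro k
      rw [smul_smul, smul_mul_assoc]
    have hR : ∀ j : ℕ,
        ((qPoch y p j / qPoch p p j) • ((a * (1 - p)) ^ j • (X^j * ↑(K^c))))
            * (∑ k ∈ Finset.range N, (qFact p k)⁻¹ • (a^k • X^k))
        = ∑ m ∈ Finset.range N,
            (qPoch y p j / qPoch p p j * (a * (1 - p)) ^ j *
              ((qFact p m)⁻¹ * a ^ m * y ^ m)) • (X^(j+m) * ↑(K^c)) := by
      intro j
      rw [Finset.mul_sum]
      refine Finset.sum_congr rfl fun m _ => ?_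
      simp only [smul_smul, smul_mul_assoc, mul_smul_comm]
      rw [mul_assoc (X^j), hcommPow m, mul_smul_comm, ← mul_assoc (X^j), ← pow_add, smul_smul]
      congr 1
      ring
    have hf : ∀ jm : ℕ × ℕ, N ≤ jm.1 + jm.2 →
        (qPoch y p jm.1 / qPoch p p jm.1 * (a * (1 - p)) ^ jm.1 *
          ((qFact p jm.2)⁻¹ * a ^ jm.2 * y ^ jm.2)) • (X^(jm.1+jm.2) * ↑(K^c)) = (0:A) := by
      intro jm h
      rw [hXge _ h, zero_mul, smul_zero]
    have htri := triangle_sum N (fun jm : ℕ × ℕ =>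
      (qPoch y p jm.1 / qPoch p p jm.1 * (a * (1 - p)) ^ jm.1 *
        ((qFact p jm.2)⁻¹ * a ^ jm.2 * y ^ jm.2)) • (X^(jm.1+jm.2) * ↑(K^c))) hf
    rw [Finset.sum_congr rfl (fun k _ => hL k), Finset.sum_congr rfl (fun j _ => hR j)]
    rw [htri]
    refine Finset.sum_congr rfl fun k hk => ?_
    have hterm : ∀ jm : ℕ × ℕ, jm ∈ Finset.HasAntidiagonal.antidiagonal k →
        (qPoch y p jm.1 / qPoch p p jm.1 * (a * (1 - p)) ^ jm.1 *
          ((qFact p jm.2)⁻¹ * a ^ jm.2 * y ^ jm.2)) • (X^(jm.1+jm.2) * ↑(K^c))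
        = (qPoch y p jm.1 / qPoch p p jm.1 * (a * (1 - p)) ^ jm.1 *
          ((qFact p jm.2)⁻¹ * a ^ jm.2 * y ^ jm.2)) • (X^k * ↑(K^c)) := by
      intro jm hjm
      rw [Finset.HasAntidiagonal.mem_antidiagonal.mp hjm]
    rw [Finset.sum_congr rfl hterm, ← Finset.sum_smul, coeff p y a hp k]
end

section
/- The similarity transformation by the q-exponential exp_{q⁻²}(α₊·E·K) transforms the evaluated triangular q-Onsager generator T₁ into a Cartan element: if E^N = 0 and ε₋ ≠ 0, then with α₊ = −q·k₊·x^{−s₀}/((q − q⁻¹)·ε₋), one has exp_{q⁻²}(α₊·E·K)·(k₊·x^{−s₀}·E + ε₋·K⁻¹) = ε₋·K⁻¹·exp_{q⁻²}(α₊·E·K), for any nonzero x ∈ ℂ, integer s₀, and scalar k₊ ∈ ℂ. -/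
section aux
variable {A : Type*} [Ring A] [Algebra ℂ A]

lemma KmulE (q : ℂ) (E : A) (K : Aˣ)
    (hKE : (K : A) * E * (↑K⁻¹ : A) = q ^ 2 • E) :
    (K : A) * E = q ^ 2 • (E * (K : A)) := by
  have h := congrArg (· * (K : A)) hKE
  simpa [mul_assoc, smul_mul_assoc] using h

lemma Kpow_E (q : ℂ) (E : A) (K : Aˣ)
    (hKE : (K : A) * E * (↑K⁻¹ : A) = q ^ 2 • E) (n : ℕ) :
    ((K : A)) ^ n * E = ((q ^ 2) ^ n) • (E * (K : A) ^ n) := by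
  induction n with
  | zero => simp
  | succ n ih =>
    have h1 := KmulE q E K hKE
    calc (K : A) ^ (n+1) * E = (K : A) ^ n * ((K : A) * E) := by
          rw [pow_succ, mul_assoc]
      _ = (K : A) ^ n * (q ^ 2 • (E * (K : A))) := by rw [h1]
      _ = (q ^ 2) • ((K : A) ^ n * E * (K : A)) := by
          rw [mul_smul_comm, mul_assoc]
      _ = (q ^ 2) • ((((q ^ 2) ^ n) • (E * (K : A) ^ n)) * (K : A)) := by rw [ih]
      _ = ((q ^ 2) ^ (n+1)) • (E * (K : A) ^ (n+1)) := by
          rw [smul_mul_assoc, smul_smul, mul_assoc, ← pow_succ, ← pow_succ']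

lemma EK_pow_nil (q : ℂ) (E : A) (K : Aˣ)
    (hKE : (K : A) * E * (↑K⁻¹ : A) = q ^ 2 • E) (N : ℕ) (hE : E ^ N = 0) :
    (E * (K : A)) ^ N = 0 := by
  suffices h : ∀ n, ∃ c : ℂ, (E * (K : A)) ^ n = c • (E ^ n * (K : A) ^ n) by
    obtain ⟨c, hc⟩ := h N
    rw [hc, hE, zero_mul, smul_zero]
  intro n
  induction n with
  | zero => exact ⟨1, by simp⟩
  | succ n ih =>
    obtain ⟨c, hc⟩ := ih
    refine ⟨c * (q ^ 2) ^ n, ?_⟩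
    calc (E * (K : A)) ^ (n+1) = (E * (K : A)) ^ n * (E * (K : A)) := pow_succ _ _
      _ = (c • (E ^ n * (K : A) ^ n)) * (E * (K : A)) := by rw [hc]
      _ = c • (E ^ n * ((K : A) ^ n * E) * (K : A)) := by
          rw [smul_mul_assoc]
          congr 1
          rw [mul_assoc, mul_assoc, mul_assoc]
      _ = c • (E ^ n * (((q ^ 2) ^ n) • (E * (K : A) ^ n)) * (K : A)) := by
          rw [Kpow_E q E K hKE]
      _ = (c * (q ^ 2) ^ n) • (E ^ (n+1) * (K : A) ^ (n+1)) := by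
          rw [mul_smul_comm, smul_mul_assoc, smul_smul]
          congr 1
          simp only [pow_succ, ← mul_assoc]

lemma E_eq_zero_of_q_zero (E : A) (K : Aˣ)
    (hKE : (K : A) * E * (↑K⁻¹ : A) = (0:ℂ) ^ 2 • E) : E = 0 := by
  have h : (K : A) * E * (↑K⁻¹ : A) = 0 := by simpa using hKE
  have h2 := congrArg (fun y => (↑K⁻¹ : A) * y * (K : A)) h
  simp only [zero_mul, mul_zero] at h2
  calc E = (↑K⁻¹ : A) * ((K : A) * E * (↑K⁻¹ : A)) * (K : A) := by
        rw [mul_assoc ((K:A)) E, ← mul_assoc (↑K⁻¹ : A), K.inv_mul, one_mul,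
          mul_assoc, K.inv_mul, mul_one]
    _ = 0 := by rw [h, mul_zero, zero_mul]

lemma Kinv_a_pow (q : ℂ) (hq0 : q ≠ 0) (E : A) (K : Aˣ)
    (hKE : (K : A) * E * (↑K⁻¹ : A) = q ^ 2 • E) (k : ℕ) :
    (↑K⁻¹ : A) * (E * (K : A)) ^ k
      = ((q ^ 2)⁻¹) ^ k • ((E * (K : A)) ^ k * (↑K⁻¹ : A)) := by
  have hstep : (↑K⁻¹ : A) * (E * (K : A)) = (q ^ 2)⁻¹ • ((E * (K : A)) * (↑K⁻¹ : A)) := by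
    have h := congrArg (fun y => (↑K⁻¹ : A) * y * (K : A)) hKE
    -- h : K⁻¹ * (K * E * K⁻¹) * K = K⁻¹ * (q^2 • E) * K
    have h1 : (↑K⁻¹ : A) * ((K : A) * E * (↑K⁻¹ : A)) * (K : A) = E := by
      rw [mul_assoc ((K:A)) E, ← mul_assoc (↑K⁻¹ : A), K.inv_mul, one_mul,
        mul_assoc, K.inv_mul, mul_one]
    have h2 : (↑K⁻¹ : A) * (q ^ 2 • E) * (K : A) = q ^ 2 • ((↑K⁻¹ : A) * (E * (K : A))) := by
      rw [mul_smul_comm, smul_mul_assoc, mul_assoc]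
    rw [h1, h2] at h
    have h3 : (q ^ 2)⁻¹ • E = (↑K⁻¹ : A) * (E * (K : A)) := by
      calc (q ^ 2)⁻¹ • E = (q ^ 2)⁻¹ • (q ^ 2 • ((↑K⁻¹ : A) * (E * (K : A)))) := by rw [← h]
        _ = (↑K⁻¹ : A) * (E * (K : A)) := by
            rw [smul_smul, inv_mul_cancel₀ (pow_ne_zero 2 hq0), one_smul]
    rw [← h3, mul_assoc, K.mul_inv, mul_one]
  induction k with
  | zero => simp
  | succ k ih =>
    calc (↑K⁻¹ : A) * (E * (K : A)) ^ (k+1)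
        = ((↑K⁻¹ : A) * (E * (K : A)) ^ k) * (E * (K : A)) := by
          rw [pow_succ, mul_assoc]
      _ = ((q ^ 2)⁻¹) ^ k • ((E * (K : A)) ^ k * ((↑K⁻¹ : A) * (E * (K : A)))) := by
          rw [ih, smul_mul_assoc, mul_assoc]
      _ = ((q ^ 2)⁻¹) ^ (k+1) • ((E * (K : A)) ^ (k+1) * (↑K⁻¹ : A)) := by
          rw [hstep, mul_smul_comm, smul_smul, ← pow_succ, ← mul_assoc, ← pow_succ]

end aux

section main
variable {A : Type*} [Ring A] [Algebra ℂ A]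

lemma expq_similarity_aux (q : ℂ) (hq : ∀ k : ℕ, 0 < k → q ^ k ≠ 1) (E : A) (K : Aˣ)
    (hKE : (K : A) * E * (↑K⁻¹ : A) = q ^ 2 • E)
    (N : ℕ) (hE : E ^ N = 0) (c εm : ℂ) (hεm : εm ≠ 0) :
    expq ((q ^ 2)⁻¹) N ((-(q * c) / ((q - q⁻¹) * εm)) • (E * (K : A)))
          * (c • E + εm • (↑K⁻¹ : A))
      = (εm • (↑K⁻¹ : A))
          * expq ((q ^ 2)⁻¹) N ((-(q * c) / ((q - q⁻¹) * εm)) • (E * (K : A))) := by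
  by_cases hq0 : q = 0
  · -- degenerate case: E = 0
    subst hq0
    have hE0 : E = 0 := E_eq_zero_of_q_zero E K hKE
    subst hE0
    simp only [zero_mul, smul_zero, zero_add]
    unfold expq
    refine ((Commute.sum_left _ _ _ ?_).eq)
    intro k _
    rcases k with _ | k
    · simpa using (Commute.one_left (εm • (↑K⁻¹ : A))).smul_left _
    · have : ((0 : A)) ^ (k+1) = 0 := by simp
      rw [this, smul_zero]
      exact Commute.zero_left _
  · -- main case
    set p : ℂ := (q ^ 2)⁻¹ with hp
    set α : ℂ := -(q * c) / ((q - q⁻¹) * εm) with hα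
    set a : A := E * (K : A) with ha
    have hq2 : q ^ 2 ≠ 1 := hq 2 (by norm_num)
    have hp1 : (1 : ℂ) - p ≠ 0 := by
      rw [sub_ne_zero]
      intro h
      exact hq2 (by rw [← inv_inv (q ^ 2), ← hp, ← h, inv_one])
    have hqq : q - q⁻¹ ≠ 0 := by
      rw [sub_ne_zero]
      intro h
      apply hq2
      rw [sq]
      nth_rewrite 2 [h]
      exact mul_inv_cancel₀ hq0
    have hpk : ∀ k : ℕ, (1 : ℂ) - p ^ (k+1) ≠ 0 := by
      intro k
      rw [sub_ne_zero]
      intro h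
      have h2 : (q ^ (2 * (k+1)))⁻¹ = 1 := by
        rw [pow_mul, ← inv_pow, ← hp, ← h]
      have h3 : q ^ (2 * (k+1)) = 1 := by
        rw [← inv_inv (q ^ (2 * (k+1))), h2, inv_one]
      exact hq (2 * (k+1)) (by positivity) h3
    have hkey : (p - 1) * α * εm = c := by
      have h21 : q ^ 2 - 1 ≠ 0 := sub_ne_zero.mpr hq2
      rw [hp, hα, ← mul_div_assoc, div_mul_eq_mul_div, div_eq_iff (mul_ne_zero hqq hεm)]
      field_simp
      ring
    have hinv : ∀ k : ℕ, (qNum p (k+1))⁻¹ * (p ^ (k+1) - 1) = p - 1 := by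
      intro k
      rw [qNum, inv_div, div_mul_eq_mul_div, div_eq_iff (hpk k)]
      ring
    have haN : a ^ N = 0 := EK_pow_nil q E K hKE N hE
    have hstep : ∀ k : ℕ, a ^ k * E = a ^ (k+1) * (↑K⁻¹ : A) := by
      intro k
      symm
      rw [pow_succ, mul_assoc]
      congr 1
      rw [ha, mul_assoc, K.mul_inv, mul_one]
    have hsc : ∀ k : ℕ, (qFact p k)⁻¹ * α ^ k * c
        = (qFact p (k+1))⁻¹ * α ^ (k+1) * εm * (p ^ (k+1) - 1) := by
      intro k
      have hf : qFact p (k+1) = qFact p k * qNum p (k+1) := rfl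
      rw [hf, mul_inv, pow_succ, ← hkey, ← hinv k]
      ring
    have hKinv : ∀ k : ℕ, (↑K⁻¹ : A) * a ^ k = p ^ k • (a ^ k * (↑K⁻¹ : A)) :=
      Kinv_a_pow q hq0 E K hKE
    have hexp : expq p N (α • a)
        = ∑ k ∈ Finset.range N, ((qFact p k)⁻¹ * α ^ k) • a ^ k := by
      unfold expq
      refine Finset.sum_congr rfl fun k _ => ?_
      rw [smul_pow, smul_smul]
    have hL : ∀ k : ℕ, (((qFact p k)⁻¹ * α ^ k) • a ^ k) * (c • E + εm • (↑K⁻¹ : A))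
        = ((qFact p (k+1))⁻¹ * α ^ (k+1) * εm * (p ^ (k+1) - 1)) • (a ^ (k+1) * (↑K⁻¹ : A))
          + ((qFact p k)⁻¹ * α ^ k * εm) • (a ^ k * (↑K⁻¹ : A)) := by
      intro k
      rw [mul_add, smul_mul_assoc, mul_smul_comm, smul_smul,
        smul_mul_assoc, mul_smul_comm, smul_smul, hstep k, hsc k]
    have hR : ∀ k : ℕ, (εm • (↑K⁻¹ : A)) * (((qFact p k)⁻¹ * α ^ k) • a ^ k)
        = ((qFact p k)⁻¹ * α ^ k * εm * (p ^ k - 1)) • (a ^ k * (↑K⁻¹ : A))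
          + ((qFact p k)⁻¹ * α ^ k * εm) • (a ^ k * (↑K⁻¹ : A)) := by
      intro k
      rw [smul_mul_assoc, mul_smul_comm, smul_smul, hKinv k, smul_smul, ← add_smul]
      congr 1
      ring
    have hshift :
        ∑ k ∈ Finset.range N,
            ((qFact p (k+1))⁻¹ * α ^ (k+1) * εm * (p ^ (k+1) - 1)) • (a ^ (k+1) * (↑K⁻¹ : A))
        = ∑ k ∈ Finset.range N,
            ((qFact p k)⁻¹ * α ^ k * εm * (p ^ k - 1)) • (a ^ k * (↑K⁻¹ : A)) := by
      set f : ℕ → A := fun k => ((qFact p k)⁻¹ * α ^ k * εm * (p ^ k - 1)) • (a ^ k * (↑K⁻¹ : A))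
        with hfdef
      have hf0 : f 0 = 0 := by simp [hfdef]
      have hfN : f N = 0 := by
        simp only [hfdef]
        rw [haN, zero_mul, smul_zero]
      calc ∑ k ∈ Finset.range N, f (k+1)
          = (∑ k ∈ Finset.range N, f (k+1)) + f 0 := by rw [hf0, add_zero]
        _ = ∑ k ∈ Finset.range (N+1), f k := (Finset.sum_range_succ' f N).symm
        _ = (∑ k ∈ Finset.range N, f k) + f N := Finset.sum_range_succ f N
        _ = ∑ k ∈ Finset.range N, f k := by rw [hfN, add_zero]
    calc expq p N (α • a) * (c • E + εm • (↑K⁻¹ : A))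
        = ∑ k ∈ Finset.range N,
            (((qFact p k)⁻¹ * α ^ k) • a ^ k) * (c • E + εm • (↑K⁻¹ : A)) := by
          rw [hexp, Finset.sum_mul]
      _ = ∑ k ∈ Finset.range N,
            (((qFact p (k+1))⁻¹ * α ^ (k+1) * εm * (p ^ (k+1) - 1)) • (a ^ (k+1) * (↑K⁻¹ : A))
              + ((qFact p k)⁻¹ * α ^ k * εm) • (a ^ k * (↑K⁻¹ : A))) :=
          Finset.sum_congr rfl fun k _ => hL k
      _ = (∑ k ∈ Finset.range N,
            ((qFact p (k+1))⁻¹ * α ^ (k+1) * εm * (p ^ (k+1) - 1)) • (a ^ (k+1) * (↑K⁻¹ : A)))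
          + ∑ k ∈ Finset.range N,
            ((qFact p k)⁻¹ * α ^ k * εm) • (a ^ k * (↑K⁻¹ : A)) :=
          Finset.sum_add_distrib
      _ = (∑ k ∈ Finset.range N,
            ((qFact p k)⁻¹ * α ^ k * εm * (p ^ k - 1)) • (a ^ k * (↑K⁻¹ : A)))
          + ∑ k ∈ Finset.range N,
            ((qFact p k)⁻¹ * α ^ k * εm) • (a ^ k * (↑K⁻¹ : A)) := by rw [hshift]
      _ = ∑ k ∈ Finset.range N,
            (((qFact p k)⁻¹ * α ^ k * εm * (p ^ k - 1)) • (a ^ k * (↑K⁻¹ : A))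
              + ((qFact p k)⁻¹ * α ^ k * εm) • (a ^ k * (↑K⁻¹ : A))) :=
          Finset.sum_add_distrib.symm
      _ = ∑ k ∈ Finset.range N, (εm • (↑K⁻¹ : A)) * (((qFact p k)⁻¹ * α ^ k) • a ^ k) :=
          Finset.sum_congr rfl fun k _ => (hR k).symm
      _ = (εm • (↑K⁻¹ : A)) * expq p N (α • a) := by rw [hexp, Finset.mul_sum]

end main

/-- The similarity transformation by `exp_{q⁻²}(α₊·E·K)` transforms the evaluated
triangular q-Onsager generator `T₁ = k₊·x^{−s₀}·E + ε₋·K⁻¹` into the Cartan element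
`ε₋·K⁻¹`, where `α₊ = −q·k₊·x^{−s₀}/((q − q⁻¹)·ε₋)`. -/


theorem expq_similarity_T1 {A : Type*} [Ring A] [Algebra ℂ A]
    (q : ℂ) (hq : ∀ k : ℕ, 0 < k → q ^ k ≠ 1) (E : A) (K : Aˣ)
    (hKE : (K : A) * E * (↑K⁻¹ : A) = q ^ 2 • E)
    (N : ℕ) (hE : E ^ N = 0)
    (x : ℂ) (hx : x ≠ 0) (s₀ : ℤ) (kp εm : ℂ) (hεm : εm ≠ 0) :
    expq (q ^ (-2 : ℤ)) N ((-(q * kp * x ^ (-s₀)) / ((q - q⁻¹) * εm)) • (E * (K : A)))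
          * ((kp * x ^ (-s₀)) • E + εm • (↑K⁻¹ : A))
      = (εm • (↑K⁻¹ : A))
          * expq (q ^ (-2 : ℤ)) N
              ((-(q * kp * x ^ (-s₀)) / ((q - q⁻¹) * εm)) • (E * (K : A))) := by
  have hz : q ^ (-2 : ℤ) = (q ^ 2)⁻¹ := by
    rw [zpow_neg]
    norm_num
  have hm : -(q * kp * x ^ (-s₀)) = -(q * (kp * x ^ (-s₀))) := by ring
  rw [hz, hm]
  exact expq_similarity_aux q hq E K hKE N hE (kp * x ^ (-s₀)) εm hεm
end
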